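/- arXiv:1511.00370 — 2 statements merged into one kernel-verified Lean document; each statement's English description precedes it below -/
import Mathlib

section
/- Under the fixed-design ridge regression setup, the function τ ↦ E[G(τ)] on (0,∞) attains its global minimum at τ = σ_ξ²/σ_π², and the function τ ↦ E[T(τ)] on (0,∞) attains its global minimum uniquely at τ = σ_ξ²/σ_π². -/
/-!
Diagonalise `X Xᵀ = U diag(d) Uᵀ` with `d ≥ 0`. By the push-through identity
`X (XᵀX + τ)⁻¹ = (XXᵀ + τ)⁻¹ X`, the hat matrix is `P_τ = U diag(d/(d+τ)) Uᵀ`. Since the coordinates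
of `π` and of `ξ` are centred and uncorrelated with variances `σ_π²`, `σ_ξ²`, and `π` is
independent of `ξ`, we get `E‖Aπ + Bξ‖² = σ_π²‖A‖_F² + σ_ξ²‖B‖_F²`. Writing `τ* = σ_ξ²/σ_π²`,
this gives
* `E T(τ) = σ_π² Σ dᵢ(τ² + τ* dᵢ)/(dᵢ+τ)²`, which exceeds `E T(τ*)` by
  `σ_π² Σ dᵢ²(τ - τ*)²/((dᵢ+τ)²(dᵢ+τ*))`; this is positive for `τ ≠ τ*` since `X ≠ 0` forces
  some `dᵢ > 0`;
* `E G(τ) = σ_π² Σ (dᵢ+τ*)/(dᵢ+τ)² / (Σ 1/(dᵢ+τ))²`, which by Cauchy–Schwarz is at least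
  `σ_π² / Σ 1/(dᵢ+τ*) = E G(τ*)`.
-/

open MeasureTheory ProbabilityTheory Filter Matrix Topology
open scoped NNReal

noncomputable section

/-- The ridge hat matrix `P_τ = X (XᵀX + τ I)⁻¹ Xᵀ`. -/
def ridgeHat {n q : ℕ} (X : Matrix (Fin n) (Fin q) ℝ) (τ : ℝ) :
    Matrix (Fin n) (Fin n) ℝ :=
  X * (Xᵀ * X + τ • 1)⁻¹ * Xᵀ

/-- The GCV criterion `G(τ) = ‖(I − P_τ)Y‖² / (n − tr P_τ)²` at the sample `Y`. -/
def gcv {n q : ℕ} (X : Matrix (Fin n) (Fin q) ℝ) (τ : ℝ) (Y : Fin n → ℝ) : ℝ :=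
  (∑ i, (((1 - ridgeHat X τ) *ᵥ Y) i) ^ 2) / ((n : ℝ) - Matrix.trace (ridgeHat X τ)) ^ 2

/-- The prediction risk `T(τ) = ‖Z − P_τ Y‖²`. -/
def predRisk {n q : ℕ} (X : Matrix (Fin n) (Fin q) ℝ) (τ : ℝ) (Z Y : Fin n → ℝ) : ℝ :=
  ∑ i, ((Z - ridgeHat X τ *ᵥ Y) i) ^ 2

section SpectralForm

variable {ι : Type*} [Fintype ι]

/- `E G(τ)` and `E T(τ)` expressed through the eigenvalues `d` of `X Xᵀ`, with `a = σ_π²` and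
`b = σ_ξ²`; both are minimised at `τ = b / a`. -/

def gcvSpectral (d : ι → ℝ) (a b τ : ℝ) : ℝ :=
  (a * ∑ i, d i * (τ / (d i + τ)) ^ 2 + b * ∑ i, (τ / (d i + τ)) ^ 2) /
    (∑ i, τ / (d i + τ)) ^ 2

def riskSpectral (d : ι → ℝ) (a b τ : ℝ) : ℝ :=
  a * ∑ i, d i * (τ / (d i + τ)) ^ 2 + b * ∑ i, (d i / (d i + τ)) ^ 2

variable {d : ι → ℝ} {a b τ : ℝ}

lemma gcvSpectral_eq (hd : ∀ i, 0 ≤ d i) (ha : a ≠ 0) (hτ : 0 < τ) :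
    gcvSpectral d a b τ =
      a * (∑ i, (d i + b / a) / (d i + τ) ^ 2) / (∑ i, (d i + τ)⁻¹) ^ 2 := by
  have hdτ : ∀ i, d i + τ ≠ 0 := fun i => by linarith [hd i]
  have hnum : a * ∑ i, d i * (τ / (d i + τ)) ^ 2 + b * ∑ i, (τ / (d i + τ)) ^ 2 =
      τ ^ 2 * (a * ∑ i, (d i + b / a) / (d i + τ) ^ 2) := by
    simp only [Finset.mul_sum, ← Finset.sum_add_distrib]
    refine Finset.sum_congr rfl fun i _ => ?_
    field_simp
  have hden : ∑ i, τ / (d i + τ) = τ * ∑ i, (d i + τ)⁻¹ := by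
    simp only [Finset.mul_sum, div_eq_mul_inv]
  rw [gcvSpectral, hnum, hden, mul_pow, mul_div_mul_left _ _ (by positivity)]

lemma gcvSpectral_le [Nonempty ι] (hd : ∀ i, 0 ≤ d i) (ha : 0 < a) (hb : 0 < b) (hτ : 0 < τ) :
    gcvSpectral d a b (b / a) ≤ gcvSpectral d a b τ := by
  have hτs : 0 < b / a := div_pos hb ha
  have hdτ : ∀ i, 0 < d i + τ := fun i => by linarith [hd i]
  have hdτs : ∀ i, 0 < d i + b / a := fun i => by linarith [hd i]
  set S := ∑ i, (d i + b / a)⁻¹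
  have hS : 0 < S := Finset.sum_pos (fun i _ => inv_pos.2 (hdτs i)) Finset.univ_nonempty
  have hR : 0 < ∑ i, (d i + τ)⁻¹ :=
    Finset.sum_pos (fun i _ => inv_pos.2 (hdτ i)) Finset.univ_nonempty
  have hmin : gcvSpectral d a b (b / a) = a / S := by
    rw [gcvSpectral_eq hd ha.ne' hτs]
    have : ∑ i, (d i + b / a) / (d i + b / a) ^ 2 = S :=
      Finset.sum_congr rfl fun i _ => by field_simp [(hdτs i).ne']
    rw [this, sq, mul_div_mul_right _ _ hS.ne']
  have hCS := Finset.sq_sum_div_le_sum_sq_div Finset.univ (fun i => (d i + τ)⁻¹)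
    (fun i _ => inv_pos.2 (hdτs i))
  have hterm : ∀ i, (d i + τ)⁻¹ ^ 2 / (d i + b / a)⁻¹ = (d i + b / a) / (d i + τ) ^ 2 :=
    fun i => by field_simp
  simp only [hterm] at hCS
  rw [hmin, gcvSpectral_eq hd ha.ne' hτ]
  calc a / S = a * ((∑ i, (d i + τ)⁻¹) ^ 2 / S) / (∑ i, (d i + τ)⁻¹) ^ 2 := by
        rw [mul_div_assoc, div_div_cancel_left' (pow_ne_zero 2 hR.ne'), div_eq_mul_inv]
    _ ≤ _ := by gcongr

lemma riskSpectral_eq_add (hd : ∀ i, 0 ≤ d i) (ha : 0 < a) (hb : 0 < b) (hτ : 0 < τ) :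
    riskSpectral d a b τ = riskSpectral d a b (b / a) +
      ∑ i, a * d i ^ 2 * (τ - b / a) ^ 2 / ((d i + τ) ^ 2 * (d i + b / a)) := by
  set τs := b / a
  have hb' : b = a * τs := (mul_div_cancel₀ b ha.ne').symm
  have hdτ : ∀ i, d i + τ ≠ 0 := fun i => by linarith [hd i]
  have hdτs : ∀ i, d i + τs ≠ 0 := fun i => by linarith [hd i, div_pos hb ha]
  simp only [riskSpectral, hb', Finset.mul_sum, ← Finset.sum_add_distrib]
  refine Finset.sum_congr rfl fun i _ => ?_
  field_simp [hdτ i, hdτs i]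
  ring

lemma riskSpectral_le (hd : ∀ i, 0 ≤ d i) (ha : 0 < a) (hb : 0 < b) (hτ : 0 < τ) :
    riskSpectral d a b (b / a) ≤ riskSpectral d a b τ := by
  rw [riskSpectral_eq_add hd ha hb hτ, le_add_iff_nonneg_right]
  exact Finset.sum_nonneg fun i _ => by have := hd i; positivity

lemma eq_of_riskSpectral_eq (hd : ∀ i, 0 ≤ d i) (hd₀ : ∃ i, d i ≠ 0) (ha : 0 < a) (hb : 0 < b)
    (hτ : 0 < τ) (h : riskSpectral d a b τ = riskSpectral d a b (b / a)) : τ = b / a := by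
  obtain ⟨i₀, hi₀⟩ := hd₀
  rw [riskSpectral_eq_add hd ha hb hτ, add_eq_left] at h
  have hterm := (Finset.sum_eq_zero_iff_of_nonneg fun i _ => by have := hd i; positivity).1 h i₀
    (Finset.mem_univ _)
  have hτs : 0 < d i₀ + b / a := by have := hd i₀; positivity
  have hτ' : 0 < d i₀ + τ := by have := hd i₀; positivity
  simpa [ha.ne', hi₀, hτs.ne', hτ'.ne', sub_eq_zero] using hterm

end SpectralForm

section WhiteNoise

variable {Ω ι κ : Type*} [MeasurableSpace Ω] {P : Measure Ω}

lemma memLp_dotProduct [Fintype ι] {W : Ω → ι → ℝ} (hW : ∀ j, MemLp (fun ω => W ω j) 2 P)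
    (a : ι → ℝ) : MemLp (fun ω => a ⬝ᵥ W ω) 2 P :=
  memLp_finsetSum _ fun j _ => (hW j).const_mul (a j)

variable [DecidableEq ι] [DecidableEq κ]

structure IsWhiteNoise (W : Ω → ι → ℝ) (σ : ℝ) (P : Measure Ω) : Prop where
  memLp : ∀ j, MemLp (fun ω => W ω j) 2 P
  integral_eq_zero : ∀ j, ∫ ω, W ω j ∂P = 0
  integral_mul : ∀ j k, ∫ ω, W ω j * W ω k ∂P = if j = k then σ else 0

lemma IsWhiteNoise.of_iIndepFun {W : Ω → ι → ℝ} {σ : ℝ} (hW : ∀ j, MemLp (fun ω => W ω j) 2 P)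
    (hind : iIndepFun (fun j ω => W ω j) P) (hmean : ∀ j, ∫ ω, W ω j ∂P = 0)
    (hsq : ∀ j, ∫ ω, W ω j ^ 2 ∂P = σ) : IsWhiteNoise W σ P where
  memLp := hW
  integral_eq_zero := hmean
  integral_mul j k := by
    split_ifs with hjk
    · subst hjk
      simpa only [sq] using hsq j
    · rw [← Pi.mul_def, (hind.indepFun hjk).integral_mul_eq_mul_integral
        (hW j).aestronglyMeasurable (hW k).aestronglyMeasurable, hmean j, zero_mul]

lemma IsWhiteNoise.of_hasLaw_gaussianReal {W : Ω → ι → ℝ} {v : ℝ≥0}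
    (hind : iIndepFun (fun j ω => W ω j) P)
    (hlaw : ∀ j, HasLaw (fun ω => W ω j) (gaussianReal 0 v) P) : IsWhiteNoise W v P := by
  have hmean : ∀ j, ∫ ω, W ω j ∂P = 0 := fun j =>
    (hlaw j).integral_eq.trans integral_id_gaussianReal
  refine .of_iIndepFun (fun j => ?_) hind hmean fun j => ?_
  · have h := memLp_id_gaussianReal' (μ := 0) (v := v) 2 (by norm_num)
    rw [← (hlaw j).map_eq] at h
    exact h.comp_of_map (hlaw j).aemeasurable
  · rw [← variance_of_integral_eq_zero (hlaw j).aemeasurable (hmean j), (hlaw j).variance_eq,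
      variance_id_gaussianReal]

variable [Fintype ι] [Fintype κ]

lemma IsWhiteNoise.integral_dotProduct_sq {W : Ω → ι → ℝ} {σ : ℝ} (hW : IsWhiteNoise W σ P)
    (a : ι → ℝ) : ∫ ω, (a ⬝ᵥ W ω) ^ 2 ∂P = σ * ∑ j, a j ^ 2 := by
  have hint : ∀ j k, Integrable (fun ω => a j * a k * (W ω j * W ω k)) P := fun j k =>
    ((hW.memLp j).integrable_mul (hW.memLp k)).const_mul _
  calc ∫ ω, (a ⬝ᵥ W ω) ^ 2 ∂P
      = ∫ ω, ∑ j, ∑ k, a j * a k * (W ω j * W ω k) ∂P := by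
        congr 1 with ω
        simp only [dotProduct, sq, Finset.sum_mul_sum]
        exact Finset.sum_congr rfl fun j _ => Finset.sum_congr rfl fun k _ => by ring
    _ = ∑ j, ∑ k, a j * a k * ∫ ω, W ω j * W ω k ∂P := by
        rw [integral_finsetSum _ fun j _ => integrable_finsetSum _ fun k _ => hint j k]
        refine Finset.sum_congr rfl fun j _ => ?_
        rw [integral_finsetSum _ fun k _ => hint j k]
        exact Finset.sum_congr rfl fun k _ => integral_const_mul _ _
    _ = σ * ∑ j, a j ^ 2 := by
        simp only [hW.integral_mul, mul_ite, mul_zero, Finset.sum_ite_eq, Finset.mem_univ,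
          if_true, Finset.mul_sum]
        exact Finset.sum_congr rfl fun j _ => by ring

lemma integral_dotProduct_add_dotProduct_sq [IsFiniteMeasure P] {π : Ω → ι → ℝ}
    {ξ : Ω → κ → ℝ} {σπ σξ : ℝ} (hπ : IsWhiteNoise π σπ P) (hξ : IsWhiteNoise ξ σξ P)
    (hπξ : IndepFun π ξ P) (a : ι → ℝ) (b : κ → ℝ) :
    ∫ ω, (a ⬝ᵥ π ω + b ⬝ᵥ ξ ω) ^ 2 ∂P = σπ * ∑ j, a j ^ 2 + σξ * ∑ k, b k ^ 2 := by
  have hu := memLp_dotProduct hπ.memLp a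
  have hv := memLp_dotProduct hξ.memLp b
  have hcross : ∫ ω, (a ⬝ᵥ π ω) * (b ⬝ᵥ ξ ω) ∂P = 0 := by
    have hind : IndepFun (fun ω => a ⬝ᵥ π ω) (fun ω => b ⬝ᵥ ξ ω) P :=
      hπξ.comp (φ := fun x => a ⬝ᵥ x) (ψ := fun y => b ⬝ᵥ y) (by fun_prop) (by fun_prop)
    have hmean : ∫ ω, a ⬝ᵥ π ω ∂P = 0 := by
      simp only [dotProduct]
      rw [integral_finsetSum _ fun j _ => ((hπ.memLp j).integrable one_le_two).const_mul _]
      simp [integral_const_mul, hπ.integral_eq_zero]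
    rw [← Pi.mul_def, hind.integral_mul_eq_mul_integral hu.aestronglyMeasurable
      hv.aestronglyMeasurable, hmean, zero_mul]
  have huv : Integrable (fun ω => (a ⬝ᵥ π ω) * (b ⬝ᵥ ξ ω)) P := hu.integrable_mul hv
  have hrest : Integrable (fun ω => 2 * ((a ⬝ᵥ π ω) * (b ⬝ᵥ ξ ω)) + (b ⬝ᵥ ξ ω) ^ 2) P :=
    (huv.const_mul 2).add hv.integrable_sq
  simp only [add_sq, add_assoc, mul_assoc]
  rw [integral_add hu.integrable_sq hrest, integral_add (huv.const_mul 2) hv.integrable_sq,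
    integral_const_mul, hcross, hπ.integral_dotProduct_sq, hξ.integral_dotProduct_sq]
  ring

lemma integral_sum_sq_mulVec_add_mulVec [IsFiniteMeasure P] {m : Type*} [Fintype m]
    {π : Ω → ι → ℝ} {ξ : Ω → κ → ℝ} {σπ σξ : ℝ} (hπ : IsWhiteNoise π σπ P)
    (hξ : IsWhiteNoise ξ σξ P) (hπξ : IndepFun π ξ P) (A : Matrix m ι ℝ) (B : Matrix m κ ℝ) :
    ∫ ω, ∑ i, ((A *ᵥ π ω + B *ᵥ ξ ω) i) ^ 2 ∂P =
      σπ * ∑ i, ∑ j, A i j ^ 2 + σξ * ∑ i, ∑ k, B i k ^ 2 := by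
  have hrow : ∀ i, MemLp (fun ω => (A *ᵥ π ω + B *ᵥ ξ ω) i) 2 P := fun i =>
    (memLp_dotProduct hπ.memLp (A i)).add (memLp_dotProduct hξ.memLp (B i))
  rw [integral_finsetSum _ fun i _ => (hrow i).integrable_sq]
  simp only [Pi.add_apply, mulVec, integral_dotProduct_add_dotProduct_sq hπ hξ hπξ,
    Finset.sum_add_distrib, Finset.mul_sum]

end WhiteNoise

lemma sum_sq_eq_trace_mul_transpose {m k : Type*} [Fintype m] [Fintype k] (A : Matrix m k ℝ) :
    ∑ i, ∑ j, A i j ^ 2 = trace (A * Aᵀ) := by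
  simp [trace, mul_apply, sq]

section ConjDiagonal

variable {m : Type*} [Fintype m] [DecidableEq m] (U : unitary (Matrix m m ℝ))

def conjDiagonal (f : m → ℝ) : Matrix m m ℝ :=
  Unitary.conjStarAlgAut ℝ _ U (diagonal f)

lemma conjDiagonal_mul (f g : m → ℝ) :
    conjDiagonal U f * conjDiagonal U g = conjDiagonal U (f * g) := by
  rw [conjDiagonal, conjDiagonal, conjDiagonal, ← map_mul, diagonal_mul_diagonal]
  rfl

lemma conjDiagonal_one : conjDiagonal U 1 = 1 := by
  rw [conjDiagonal, show diagonal (1 : m → ℝ) = 1 from diagonal_one, map_one]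

lemma conjDiagonal_sub (f g : m → ℝ) :
    conjDiagonal U (f - g) = conjDiagonal U f - conjDiagonal U g := by
  rw [conjDiagonal, conjDiagonal, conjDiagonal, ← map_sub, diagonal_sub]
  rfl

lemma conjDiagonal_add_const (f : m → ℝ) (c : ℝ) :
    conjDiagonal U (fun i => f i + c) = conjDiagonal U f + c • 1 := by
  rw [conjDiagonal, conjDiagonal, ← map_one (Unitary.conjStarAlgAut ℝ _ U), ← map_smul, ← map_add,
    smul_one_eq_diagonal, diagonal_add]

lemma transpose_conjDiagonal (f : m → ℝ) : (conjDiagonal U f)ᵀ = conjDiagonal U f := by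
  rw [← conjTranspose_eq_transpose_of_trivial, ← star_eq_conjTranspose, conjDiagonal, ← map_star,
    star_eq_conjTranspose, diagonal_conjTranspose, star_trivial]

lemma trace_conjDiagonal (f : m → ℝ) : trace (conjDiagonal U f) = ∑ i, f i := by
  rw [conjDiagonal, Unitary.conjStarAlgAut_apply, trace_mul_cycle, Unitary.coe_star_mul_self,
    one_mul, trace_diagonal]

lemma inv_conjDiagonal {f : m → ℝ} (hf : ∀ i, f i ≠ 0) :
    (conjDiagonal U f)⁻¹ = conjDiagonal U f⁻¹ := by
  refine inv_eq_right_inv ?_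
  rw [conjDiagonal_mul, show f * f⁻¹ = 1 from funext fun i => mul_inv_cancel₀ (hf i),
    conjDiagonal_one]

lemma sum_sq_conjDiagonal (f : m → ℝ) :
    ∑ i, ∑ j, conjDiagonal U f i j ^ 2 = ∑ i, f i ^ 2 := by
  rw [sum_sq_eq_trace_mul_transpose, transpose_conjDiagonal, conjDiagonal_mul,
    trace_conjDiagonal]
  simp only [Pi.mul_apply, sq]

lemma sum_sq_conjDiagonal_mul {k : Type*} [Fintype k] {X : Matrix m k ℝ} {d : m → ℝ}
    (hK : X * Xᵀ = conjDiagonal U d) (f : m → ℝ) :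
    ∑ i, ∑ j, (conjDiagonal U f * X) i j ^ 2 = ∑ i, d i * f i ^ 2 := by
  rw [sum_sq_eq_trace_mul_transpose, transpose_mul, transpose_conjDiagonal, Matrix.mul_assoc,
    ← Matrix.mul_assoc X, hK, conjDiagonal_mul, conjDiagonal_mul, trace_conjDiagonal]
  exact Finset.sum_congr rfl fun i _ => by simp only [Pi.mul_apply]; ring

lemma exists_ne_zero_of_mul_transpose_eq_conjDiagonal {k : Type*} [Fintype k]
    {X : Matrix m k ℝ} {d : m → ℝ} (hX : X ≠ 0) (hK : X * Xᵀ = conjDiagonal U d) :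
    ∃ i, d i ≠ 0 := by
  have htr : trace (X * Xᵀ) ≠ 0 := by
    simpa using trace_mul_conjTranspose_self_eq_zero_iff.not.2 hX
  rw [hK, trace_conjDiagonal] at htr
  obtain ⟨i, -, hi⟩ := Finset.exists_ne_zero_of_sum_ne_zero htr
  exact ⟨i, hi⟩

end ConjDiagonal

lemma exists_mul_transpose_eq_conjDiagonal {m k : Type*} [Fintype m] [DecidableEq m] [Fintype k]
    (X : Matrix m k ℝ) :
    ∃ (U : unitary (Matrix m m ℝ)) (d : m → ℝ), (∀ i, 0 ≤ d i) ∧ X * Xᵀ = conjDiagonal U d := by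
  have hK : (X * Xᵀ).PosSemidef := by
    simpa using posSemidef_self_mul_conjTranspose X
  refine ⟨hK.isHermitian.eigenvectorUnitary, _, hK.eigenvalues_nonneg, ?_⟩
  have := hK.isHermitian.spectral_theorem
  rwa [RCLike.ofReal_real_eq_id, Function.id_comp] at this

lemma isUnit_det_transpose_mul_add_smul_one {m k : Type*} [Fintype m] [Fintype k] [DecidableEq k]
    (X : Matrix m k ℝ) {τ : ℝ} (hτ : 0 < τ) : IsUnit (Xᵀ * X + τ • 1).det := by
  have hpos : (Xᵀ * X + τ • 1).PosDef := by
    simpa using PosDef.posSemidef_add (posSemidef_conjTranspose_mul_self X) (PosDef.one.smul hτ)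
  exact (isUnit_iff_isUnit_det _).1 hpos.isUnit

section Ridge

variable {n q : ℕ} {X : Matrix (Fin n) (Fin q) ℝ} {U : unitary (Matrix (Fin n) (Fin n) ℝ)}
  {d : Fin n → ℝ} {τ : ℝ}

lemma ridgeHat_eq_inv_mul (hτ : 0 < τ) :
    ridgeHat X τ = (X * Xᵀ + τ • 1)⁻¹ * (X * Xᵀ) := by
  set A := Xᵀ * X + τ • 1
  set B := X * Xᵀ + τ • 1
  have hA : IsUnit A.det := isUnit_det_transpose_mul_add_smul_one X hτ
  have hB : IsUnit B.det := by
    simpa using isUnit_det_transpose_mul_add_smul_one Xᵀ hτ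
  have hpush : B * X = X * A := by
    simp only [A, B, Matrix.add_mul, Matrix.mul_add, Matrix.smul_mul, Matrix.mul_smul,
      Matrix.one_mul, Matrix.mul_one, Matrix.mul_assoc]
  have hswap : X * A⁻¹ = B⁻¹ * X :=
    calc X * A⁻¹ = B⁻¹ * (B * X) * A⁻¹ := by rw [Matrix.nonsing_inv_mul_cancel_left _ _ hB]
      _ = B⁻¹ * X := by rw [hpush, ← Matrix.mul_assoc, Matrix.mul_nonsing_inv_cancel_right _ _ hA]
  rw [ridgeHat, hswap, Matrix.mul_assoc]

lemma ridgeHat_eq_conjDiagonal (hd : ∀ i, 0 ≤ d i) (hK : X * Xᵀ = conjDiagonal U d)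
    (hτ : 0 < τ) : ridgeHat X τ = conjDiagonal U fun i => d i / (d i + τ) := by
  have hdτ : ∀ i, d i + τ ≠ 0 := fun i => by linarith [hd i]
  rw [ridgeHat_eq_inv_mul hτ, hK, ← conjDiagonal_add_const, inv_conjDiagonal _ hdτ,
    conjDiagonal_mul]
  congr 1 with i
  simp only [Pi.mul_apply, Pi.inv_apply, div_eq_inv_mul]

lemma one_sub_ridgeHat_eq_conjDiagonal (hd : ∀ i, 0 ≤ d i) (hK : X * Xᵀ = conjDiagonal U d)
    (hτ : 0 < τ) : 1 - ridgeHat X τ = conjDiagonal U fun i => τ / (d i + τ) := by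
  have hdτ : ∀ i, d i + τ ≠ 0 := fun i => by linarith [hd i]
  rw [ridgeHat_eq_conjDiagonal hd hK hτ, ← conjDiagonal_one U, ← conjDiagonal_sub]
  congr 1 with i
  simp only [Pi.sub_apply, Pi.one_apply]
  field_simp [hdτ i]
  ring

lemma natCast_sub_trace_ridgeHat (hd : ∀ i, 0 ≤ d i) (hK : X * Xᵀ = conjDiagonal U d)
    (hτ : 0 < τ) : (n : ℝ) - trace (ridgeHat X τ) = ∑ i, τ / (d i + τ) := by
  have htr : trace (1 : Matrix (Fin n) (Fin n) ℝ) = n := by simp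
  rw [← htr, ← trace_sub, one_sub_ridgeHat_eq_conjDiagonal hd hK hτ,
    trace_conjDiagonal]

end Ridge

section ExpectedCriteria

variable {n q : ℕ} {X : Matrix (Fin n) (Fin q) ℝ} {U : unitary (Matrix (Fin n) (Fin n) ℝ)}
  {d : Fin n → ℝ} {τ : ℝ} {Ω : Type*} [MeasurableSpace Ω] {P : Measure Ω} [IsFiniteMeasure P]
  {π : Ω → Fin q → ℝ} {ξ : Ω → Fin n → ℝ} {σπ σξ : ℝ}

lemma integral_gcv_eq_gcvSpectral (hπ : IsWhiteNoise π σπ P) (hξ : IsWhiteNoise ξ σξ P)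
    (hπξ : IndepFun π ξ P) (hd : ∀ i, 0 ≤ d i) (hK : X * Xᵀ = conjDiagonal U d) (hτ : 0 < τ) :
    ∫ ω, gcv X τ (X *ᵥ π ω + ξ ω) ∂P = gcvSpectral d σπ σξ τ := by
  have hres : ∀ ω, (1 - ridgeHat X τ) *ᵥ (X *ᵥ π ω + ξ ω) =
      ((1 - ridgeHat X τ) * X) *ᵥ π ω + (1 - ridgeHat X τ) *ᵥ ξ ω := fun ω => by
    rw [mulVec_add, mulVec_mulVec]
  simp only [gcv, hres]
  rw [integral_div, integral_sum_sq_mulVec_add_mulVec hπ hξ hπξ,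
    natCast_sub_trace_ridgeHat hd hK hτ, one_sub_ridgeHat_eq_conjDiagonal hd hK hτ,
    sum_sq_conjDiagonal_mul U hK, sum_sq_conjDiagonal, gcvSpectral]

lemma integral_predRisk_eq_riskSpectral (hπ : IsWhiteNoise π σπ P) (hξ : IsWhiteNoise ξ σξ P)
    (hπξ : IndepFun π ξ P) (hd : ∀ i, 0 ≤ d i) (hK : X * Xᵀ = conjDiagonal U d) (hτ : 0 < τ) :
    ∫ ω, predRisk X τ (X *ᵥ π ω) (X *ᵥ π ω + ξ ω) ∂P = riskSpectral d σπ σξ τ := by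
  have hres : ∀ ω, X *ᵥ π ω - ridgeHat X τ *ᵥ (X *ᵥ π ω + ξ ω) =
      ((1 - ridgeHat X τ) * X) *ᵥ π ω + (-ridgeHat X τ) *ᵥ ξ ω := fun ω => by
    rw [mulVec_add, mulVec_mulVec, Matrix.sub_mul, Matrix.one_mul, sub_mulVec, neg_mulVec]
    abel
  simp only [predRisk, hres]
  rw [integral_sum_sq_mulVec_add_mulVec hπ hξ hπξ, one_sub_ridgeHat_eq_conjDiagonal hd hK hτ,
    sum_sq_conjDiagonal_mul U hK]
  simp only [Matrix.neg_apply, neg_sq]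
  rw [ridgeHat_eq_conjDiagonal hd hK hτ, sum_sq_conjDiagonal, riskSpectral]

end ExpectedCriteria

theorem stmt1_general
    (n q : ℕ)
    (X : Matrix (Fin n) (Fin q) ℝ) (hX : X ≠ 0)
    {Ω : Type*} [MeasurableSpace Ω] (P : Measure Ω) [IsProbabilityMeasure P]
    (σπ2 : ℝ) (hσπ : 0 < σπ2) (σξ2 : ℝ≥0) (hσξ : 0 < σξ2)
    (π : Ω → Fin q → ℝ) (hπmeas : ∀ i, Measurable fun ω => π ω i)
    (hπindep : iIndepFun (fun i ω => π ω i) P)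
    (hπsq : ∀ i, Integrable (fun ω => (π ω i) ^ 2) P)
    (hπmean : ∀ i, ∫ ω, π ω i ∂P = 0)
    (hπvar : ∀ i, ∫ ω, (π ω i) ^ 2 ∂P = σπ2)
    (ξ : Ω → Fin n → ℝ) (hξmeas : ∀ i, Measurable fun ω => ξ ω i)
    (hξindep : iIndepFun (fun i ω => ξ ω i) P)
    (hξlaw : ∀ i, Measure.map (fun ω => ξ ω i) P = gaussianReal 0 σξ2)
    (hπξ : IndepFun π ξ P)
    :
    (∀ τ : ℝ, 0 < τ →
        ∫ ω, gcv X ((σξ2 : ℝ) / σπ2) (X *ᵥ π ω + ξ ω) ∂P ≤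
          ∫ ω, gcv X τ (X *ᵥ π ω + ξ ω) ∂P) ∧
      (∀ τ : ℝ, 0 < τ →
        (∫ ω, predRisk X ((σξ2 : ℝ) / σπ2) (X *ᵥ π ω) (X *ᵥ π ω + ξ ω) ∂P ≤
            ∫ ω, predRisk X τ (X *ᵥ π ω) (X *ᵥ π ω + ξ ω) ∂P) ∧
          (∫ ω, predRisk X τ (X *ᵥ π ω) (X *ᵥ π ω + ξ ω) ∂P =
              ∫ ω, predRisk X ((σξ2 : ℝ) / σπ2) (X *ᵥ π ω) (X *ᵥ π ω + ξ ω) ∂P →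
            τ = (σξ2 : ℝ) / σπ2)) := by
  have hσξ' : (0 : ℝ) < σξ2 := hσξ
  have hτs : 0 < (σξ2 : ℝ) / σπ2 := div_pos hσξ' hσπ
  have hπw : IsWhiteNoise π σπ2 P := .of_iIndepFun
    (fun i => (memLp_two_iff_integrable_sq (hπmeas i).aestronglyMeasurable).2 (hπsq i))
    hπindep hπmean hπvar
  have hξw : IsWhiteNoise ξ σξ2 P :=
    .of_hasLaw_gaussianReal hξindep fun i => ⟨(hξmeas i).aemeasurable, hξlaw i⟩
  obtain ⟨U, d, hd, hK⟩ := exists_mul_transpose_eq_conjDiagonal X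
  obtain ⟨i₀, hi₀⟩ := exists_ne_zero_of_mul_transpose_eq_conjDiagonal U hX hK
  have : Nonempty (Fin n) := ⟨i₀⟩
  have hG := fun τ (hτ : 0 < τ) => integral_gcv_eq_gcvSpectral hπw hξw hπξ hd hK hτ
  have hT := fun τ (hτ : 0 < τ) => integral_predRisk_eq_riskSpectral hπw hξw hπξ hd hK hτ
  refine ⟨fun τ hτ => ?_, fun τ hτ => ⟨?_, fun h => ?_⟩⟩
  · rw [hG τ hτ, hG _ hτs]
    exact gcvSpectral_le hd hσπ hσξ' hτ
  · rw [hT τ hτ, hT _ hτs]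
    exact riskSpectral_le hd hσπ hσξ' hτ
  · rw [hT τ hτ, hT _ hτs] at h
    exact eq_of_riskSpectral_eq hd ⟨i₀, hi₀⟩ hσπ hσξ' hτ h

/-- Under the fixed-design ridge regression setup, the function `τ ↦ E[G(τ)]` on `(0,∞)`
attains its global minimum at `τ* = σ_ξ²/σ_π²`, and the function `τ ↦ E[T(τ)]` on `(0,∞)`
attains its global minimum uniquely at `τ* = σ_ξ²/σ_π²`. Here `Z = Xπ` and `Y = Xπ + ξ`. -/
theorem stmt1
    (n q : ℕ) (hn : 0 < n) (hq : 0 < q)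
    (X : Matrix (Fin n) (Fin q) ℝ) (hX : X ≠ 0)
    {Ω : Type*} [MeasurableSpace Ω] (P : Measure Ω) [IsProbabilityMeasure P]
    (σπ2 : ℝ) (hσπ : 0 < σπ2) (σξ2 : ℝ≥0) (hσξ : 0 < σξ2)
    (π : Ω → Fin q → ℝ) (hπmeas : ∀ i, Measurable fun ω => π ω i)
    (hπindep : iIndepFun (fun i ω => π ω i) P)
    (hπid : ∀ i j, Measure.map (fun ω => π ω i) P = Measure.map (fun ω => π ω j) P)
    (hπsq : ∀ i, Integrable (fun ω => (π ω i) ^ 2) P)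
    (hπmean : ∀ i, ∫ ω, π ω i ∂P = 0)
    (hπvar : ∀ i, ∫ ω, (π ω i) ^ 2 ∂P = σπ2)
    (ξ : Ω → Fin n → ℝ) (hξmeas : ∀ i, Measurable fun ω => ξ ω i)
    (hξindep : iIndepFun (fun i ω => ξ ω i) P)
    (hξlaw : ∀ i, Measure.map (fun ω => ξ ω i) P = gaussianReal 0 σξ2)
    (hπξ : IndepFun π ξ P)
    :
    (∀ τ : ℝ, 0 < τ →
        ∫ ω, gcv X ((σξ2 : ℝ) / σπ2) (X *ᵥ π ω + ξ ω) ∂P ≤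
          ∫ ω, gcv X τ (X *ᵥ π ω + ξ ω) ∂P) ∧
      (∀ τ : ℝ, 0 < τ →
        (∫ ω, predRisk X ((σξ2 : ℝ) / σπ2) (X *ᵥ π ω) (X *ᵥ π ω + ξ ω) ∂P ≤
            ∫ ω, predRisk X τ (X *ᵥ π ω) (X *ᵥ π ω + ξ ω) ∂P) ∧
          (∫ ω, predRisk X τ (X *ᵥ π ω) (X *ᵥ π ω + ξ ω) ∂P =
              ∫ ω, predRisk X ((σξ2 : ℝ) / σπ2) (X *ᵥ π ω) (X *ᵥ π ω + ξ ω) ∂P →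
            τ = (σξ2 : ℝ) / σπ2)) :=
  stmt1_general n q X hX P σπ2 hσπ σξ2 hσξ π hπmeas hπindep hπsq hπmean hπvar ξ hξmeas hξindep hξlaw
    hπξ
end
end

section
/- Let m be a positive integer, let λ_1,…,λ_m be nonnegative reals with at least one λ_i > 0, and let a, b > 0. Define g : (0,∞) → ℝ by g(τ) = Σ_{i=1}^m λ_i(aτ² + bλ_i)/(λ_i + τ)². Then for every τ > 0 one has g(τ) ≥ g(b/a), with equality if and only if τ = b/a; that is, g attains its global minimum on (0,∞) uniquely at τ = b/a. -/
/-!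
Each summand of `g` exceeds its value at `τ = b/a` by exactly
`(aτ - b)² · λ² / ((λ + τ)² (aλ + b))`. Hence `g(τ) - g(b/a)` is `(aτ - b)²` times a weight that
is positive as soon as some `λ_i > 0`, which gives both the inequality and the equality case.
-/

noncomputable section

/-- The objective function of the deterministic ridge-tuning minimization:
`g(τ) = Σ_{i=1}^m λ_i (a τ² + b λ_i) / (λ_i + τ)²`. -/
def ridgeObjective (m : ℕ) (lam : Fin m → ℝ) (a b : ℝ) (τ : ℝ) : ℝ :=
  ∑ i : Fin m, lam i * (a * τ ^ 2 + b * lam i) / (lam i + τ) ^ 2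

def ridgeGapWeight (m : ℕ) (lam : Fin m → ℝ) (a b : ℝ) (τ : ℝ) : ℝ :=
  ∑ i : Fin m, lam i ^ 2 / ((lam i + τ) ^ 2 * (a * lam i + b))

lemma ridge_summand_sub (lam τ a b : ℝ) (hτ : lam + τ ≠ 0) (hlin : a * lam + b ≠ 0)
    (ha : a ≠ 0) :
    lam * (a * τ ^ 2 + b * lam) / (lam + τ) ^ 2
      - lam * (a * (b / a) ^ 2 + b * lam) / (lam + b / a) ^ 2
      = (a * τ - b) ^ 2 * (lam ^ 2 / ((lam + τ) ^ 2 * (a * lam + b))) := by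
  have hlin' : lam * a + b ≠ 0 := by rwa [mul_comm]  -- the form `field_simp` looks for
  rw [show lam + b / a = (a * lam + b) / a by field_simp]
  field_simp
  ring

lemma ridgeObjective_sub (m : ℕ) (lam : Fin m → ℝ) (hlam : ∀ i, 0 ≤ lam i) {a b τ : ℝ}
    (ha : 0 < a) (hb : 0 < b) (hτ : 0 < τ) :
    ridgeObjective m lam a b τ - ridgeObjective m lam a b (b / a)
      = (a * τ - b) ^ 2 * ridgeGapWeight m lam a b τ := by
  rw [ridgeObjective, ridgeObjective, ← Finset.sum_sub_distrib, ridgeGapWeight, Finset.mul_sum]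
  refine Finset.sum_congr rfl fun i _ => ridge_summand_sub _ _ _ _ ?_ ?_ ha.ne'
  · exact (add_pos_of_nonneg_of_pos (hlam i) hτ).ne'
  · exact (add_pos_of_nonneg_of_pos (mul_nonneg ha.le (hlam i)) hb).ne'

lemma ridgeGapWeight_pos (m : ℕ) (lam : Fin m → ℝ) (hlam : ∀ i, 0 ≤ lam i)
    (hex : ∃ i, 0 < lam i) {a b τ : ℝ} (ha : 0 < a) (hb : 0 < b) (hτ : 0 < τ) :
    0 < ridgeGapWeight m lam a b τ := by
  obtain ⟨j, hj⟩ := hex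
  refine Finset.sum_pos' (fun i _ => ?_) ⟨j, Finset.mem_univ j, by positivity⟩
  have := hlam i
  positivity

theorem stmt13_general (m : ℕ) (lam : Fin m → ℝ) (hlam : ∀ i, 0 ≤ lam i)
    (hex : ∃ i, 0 < lam i) (a b : ℝ) (ha : 0 < a) (hb : 0 < b) :
    ∀ τ : ℝ, 0 < τ →
      ridgeObjective m lam a b (b / a) ≤ ridgeObjective m lam a b τ ∧
        (ridgeObjective m lam a b τ = ridgeObjective m lam a b (b / a) ↔ τ = b / a) := by
  intro τ hτ
  have hgap := ridgeObjective_sub m lam hlam ha hb hτ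
  have hweight := ridgeGapWeight_pos m lam hlam hex ha hb hτ
  refine ⟨sub_nonneg.mp (hgap ▸ by positivity), ?_⟩
  rw [← sub_eq_zero, hgap, mul_eq_zero, or_iff_left hweight.ne', sq_eq_zero_iff, sub_eq_zero,
    eq_div_iff ha.ne', mul_comm]

/-- Let `m` be a positive integer, `λ_1,…,λ_m` nonnegative reals with at least one `λ_i > 0`,
and `a, b > 0`. Define `g(τ) = Σ_i λ_i (a τ² + b λ_i)/(λ_i + τ)²` on `(0,∞)`. Then for every
`τ > 0` one has `g(τ) ≥ g(b/a)`, with equality iff `τ = b/a`: `g` attains its global minimum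
on `(0,∞)` uniquely at `τ = b/a`. -/
theorem stmt13 (m : ℕ) (hm : 0 < m) (lam : Fin m → ℝ) (hlam : ∀ i, 0 ≤ lam i)
    (hex : ∃ i, 0 < lam i) (a b : ℝ) (ha : 0 < a) (hb : 0 < b) :
    ∀ τ : ℝ, 0 < τ →
      ridgeObjective m lam a b (b / a) ≤ ridgeObjective m lam a b τ ∧
        (ridgeObjective m lam a b τ = ridgeObjective m lam a b (b / a) ↔ τ = b / a) :=
  stmt13_general m lam hlam hex a b ha hb
end
end
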